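/- The indexed family 𝓖 = {G_n}_{n∈ℕ} with G_0 = ℕ and G_n = [0, n] for n > 0 is PCS[O]-learnable, but no learner–teacher pair PCS[T]-learns 𝓖 (indeed 𝓖 is not PCS[T]-learnable, since every finite string of naturals extends both to an enumeration of ℕ and to an enumeration of some [0, n]). -/

import Mathlib

/-!
Common framework: indexed families of c.e. sets, enumerations (texts),
learning machines with run-time, membership-oracle machines, teachers,
and the learning criteria PRT/PSD/PMC/PCS with oracle/teacher variants.
-/

namespace TeachLearn

attribute [local instance] Classical.propDecidable

/-- The initial segment (finite string) of length `n` of the infinite sequence `f`. -/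
def str (f : ℕ → ℕ) (n : ℕ) : List ℕ := (List.range n).map f

/-- `f` is an enumeration (a text) of the set `A`: its set of values is exactly `A`. -/
def IsEnum (f : ℕ → ℕ) (A : Set ℕ) : Prop := Set.range f = A

/-- An indexed family: a uniformly computably enumerable sequence of nonempty
subsets of `ℕ`. -/
structure IndexedFamily where
  F : ℕ → Set ℕ
  nonempty : ∀ n, (F n).Nonempty
  uce : REPred fun p : ℕ × ℕ => p.1 ∈ F p.2

namespace IndexedFamily

/-- `A` is a member of the indexed family `𝓕`. -/
def Mem (𝓕 : IndexedFamily) (A : Set ℕ) : Prop := ∃ n, 𝓕.F n = A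

/-- The minimal index of `A` in the indexed family `𝓕`. -/
noncomputable def mi (𝓕 : IndexedFamily) (A : Set ℕ) : ℕ := sInf {n | 𝓕.F n = A}

end IndexedFamily

/-- A learning machine: a partial computable map from finite strings to
hypotheses, together with a (cumulative) run-time function.  The run-time is
defined exactly when the machine halts, dominates the length of the input read
as well as the size of the output produced, and is monotone along prefixes
(time is accumulated while reading an enumeration). -/
structure Machine where
  eval : List ℕ →. ℕ
  partrec : Partrec eval
  time : List ℕ →. ℕ
  time_dom : ∀ σ, (time σ).Dom ↔ (eval σ).Dom
  length_le_time : ∀ ⦃σ t⦄, t ∈ time σ → σ.length ≤ t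
  size_le_time : ∀ ⦃σ t h⦄, t ∈ time σ → h ∈ eval σ → Nat.size h ≤ t
  time_mono : ∀ ⦃σ τ s t⦄, σ <+: τ → s ∈ time σ → t ∈ time τ → s ≤ t

/-- A teacher: a computable, prefix-monotone map on finite strings whose
output consists of elements of its input. -/
structure Teacher where
  t : List ℕ → List ℕ
  computable : Computable t
  mono : ∀ ⦃σ τ⦄, σ <+: τ → t σ <+: t τ
  content_sub : ∀ ⦃σ x⦄, x ∈ t σ → x ∈ σ

/-- A learning machine with access to a membership oracle, modeled
interactively: `step (σ, ans)` is the machine's action on input string `σ`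
after having received the list `ans` of oracle answers so far; an even value
`2 * q` asks the oracle whether `q` belongs to the target, while an odd value
`2 * h + 1` halts the interaction with hypothesis `h`.  The run-time dominates
the length of the input read, the number of oracle queries asked, and the size
of the value produced, and is monotone (cumulative). -/
structure OMachine where
  step : List ℕ × List Bool →. ℕ
  partrec : Partrec step
  time : List ℕ × List Bool →. ℕ
  time_dom : ∀ x, (time x).Dom ↔ (step x).Dom
  length_le_time : ∀ ⦃x t⦄, t ∈ time x → x.1.length ≤ t
  queries_le_time : ∀ ⦃x t⦄, t ∈ time x → x.2.length ≤ t
  size_le_time : ∀ ⦃x t v⦄, t ∈ time x → v ∈ step x → Nat.size v ≤ t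
  time_mono : ∀ ⦃σ τ a b s t⦄, σ <+: τ → a <+: b →
    s ∈ time (σ, a) → t ∈ time (τ, b) → s ≤ t

namespace OMachine

/-- The answer lists reachable in the interaction of the machine `M` with the
membership oracle for `A` on the input string `σ`. -/
inductive Reach (M : OMachine) (A : Set ℕ) (σ : List ℕ) : List Bool → Prop
  | nil : Reach M A σ []
  | query {ans q} : Reach M A σ ans → (2 * q) ∈ M.step (σ, ans) →
      Reach M A σ (ans ++ [decide (q ∈ A)])

/-- `M.Out A σ h ans`: on input `σ`, interacting with the membership oracle
for `A`, the machine `M` receives the oracle answers `ans` and halts with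
hypothesis `h`. -/
def Out (M : OMachine) (A : Set ℕ) (σ : List ℕ) (h : ℕ) (ans : List Bool) : Prop :=
  M.Reach A σ ans ∧ (2 * h + 1) ∈ M.step (σ, ans)

/-- With oracle `A`, on the stage inputs `I`, the machine `M` outputs the
hypothesis `h` from stage `n` onwards. -/
def Settles (M : OMachine) (A : Set ℕ) (I : ℕ → List ℕ) (h n : ℕ) : Prop :=
  ∀ m, n ≤ m → ∃ ans, M.Out A (I m) h ans

end OMachine

/-- A teacher for the teacher-and-oracle model: it additionally has access to
the oracle answers received so far by the learner. -/
structure OTeacher where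
  t : List ℕ → List Bool → List ℕ
  computable : Computable₂ t
  mono : ∀ ⦃σ τ a b⦄, σ <+: τ → a <+: b → t σ a <+: t τ b
  content_sub : ∀ ⦃σ a x⦄, x ∈ t σ a → x ∈ σ

/-- On the stage inputs `I`, the machine `M` outputs the hypothesis `h` from
stage `n` onwards. -/
def Machine.Settles (M : Machine) (I : ℕ → List ℕ) (h n : ℕ) : Prop :=
  ∀ m, n ≤ m → M.eval (I m) = Part.some h

/-- Settling for the teacher-and-oracle model: `hist m` records the oracle
answers the learner received at stage `m - 1`, which the teacher sees at
stage `m`.  From stage `n` on, the learner outputs `h`. -/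
def OMachine.TOSettles (M : OMachine) (T : OTeacher) (A : Set ℕ) (f : ℕ → ℕ)
    (hist : ℕ → List Bool) (h n : ℕ) : Prop :=
  ∀ m, n ≤ m → M.Out A (T.t (str f m) (hist m)) h (hist (m + 1))

/-! ### Polynomial run-time (PRT) -/

/-- `M` converges to the hypothesis `h` on the stage inputs `I` within fewer
than `B` computation steps. -/
def Machine.PRTIdentifies (M : Machine) (I : ℕ → List ℕ) (h B : ℕ) : Prop :=
  ∃ n, M.Settles I h n ∧ ∃ t, t ∈ M.time (I n) ∧ t < B

/-- Oracle version of `Machine.PRTIdentifies`; the run-time bound also bounds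
the oracle use (by `queries_le_time`). -/
def OMachine.PRTIdentifies (M : OMachine) (A : Set ℕ) (I : ℕ → List ℕ) (h B : ℕ) : Prop :=
  ∃ n, M.Settles A I h n ∧
    ∃ ans t, M.Out A (I n) h ans ∧ t ∈ M.time (I n, ans) ∧ t < B

/-- `M` PRT-learns `𝓕` with polynomial bound `p`. -/
def PRTLearnsWith (M : Machine) (p : Polynomial ℕ) (𝓕 : IndexedFamily) : Prop :=
  ∀ A, 𝓕.Mem A → ∀ f, IsEnum f A →
    ∃ h, 𝓕.F h = A ∧ M.PRTIdentifies (str f) h (p.eval (𝓕.mi A))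

/-- `𝓕` is PRT-learnable. -/
def PRT (𝓕 : IndexedFamily) : Prop := ∃ M p, PRTLearnsWith M p 𝓕

/-- The learner-teacher pair `(M, T)` PRT-learns `𝓕` with polynomial bound `p`. -/
def PRTTLearnsWith (M : Machine) (T : Teacher) (p : Polynomial ℕ) (𝓕 : IndexedFamily) : Prop :=
  ∀ A, 𝓕.Mem A → ∀ f, IsEnum f A →
    ∃ h, 𝓕.F h = A ∧ M.PRTIdentifies (fun m => T.t (str f m)) h (p.eval (𝓕.mi A))

/-- `𝓕` is PRT[T]-learnable. -/
def PRTT (𝓕 : IndexedFamily) : Prop := ∃ M T p, PRTTLearnsWith M T p 𝓕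

/-- `𝓕` is PRT[O]-learnable. -/
def PRTO (𝓕 : IndexedFamily) : Prop :=
  ∃ (M : OMachine) (p : Polynomial ℕ), ∀ A, 𝓕.Mem A → ∀ f, IsEnum f A →
    ∃ h, 𝓕.F h = A ∧ M.PRTIdentifies A (str f) h (p.eval (𝓕.mi A))

/-- `𝓕` is PRT[T,O]-learnable. -/
def PRTTO (𝓕 : IndexedFamily) : Prop :=
  ∃ (M : OMachine) (T : OTeacher) (p : Polynomial ℕ),
    ∀ A, 𝓕.Mem A → ∀ f, IsEnum f A →
      ∃ h, 𝓕.F h = A ∧ ∃ hist : ℕ → List Bool, hist 0 = [] ∧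
        ∃ n, M.TOSettles T A f hist h n ∧
          ∃ t, t ∈ M.time (T.t (str f n) (hist n), hist (n + 1)) ∧ t < p.eval (𝓕.mi A)

/-! ### Polynomial size dataset (PSD) -/

/-- `M` converges to `h` on an initial stage whose input contains fewer than
`B` distinct elements. -/
def Machine.PSDIdentifies (M : Machine) (I : ℕ → List ℕ) (h B : ℕ) : Prop :=
  ∃ n, M.Settles I h n ∧ (I n).toFinset.card < B

/-- Oracle version of `Machine.PSDIdentifies`; the oracle use is also bounded. -/
def OMachine.PSDIdentifies (M : OMachine) (A : Set ℕ) (I : ℕ → List ℕ) (h B : ℕ) : Prop :=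
  ∃ n, M.Settles A I h n ∧ (I n).toFinset.card < B ∧
    ∃ ans, M.Out A (I n) h ans ∧ ans.length ≤ B

/-- `𝓕` is PSD-learnable. -/
def PSD (𝓕 : IndexedFamily) : Prop :=
  ∃ (M : Machine) (p : Polynomial ℕ), ∀ A, 𝓕.Mem A → ∀ f, IsEnum f A →
    ∃ h, 𝓕.F h = A ∧ M.PSDIdentifies (str f) h (p.eval (𝓕.mi A))

/-- `𝓕` is PSD[T]-learnable. -/
def PSDT (𝓕 : IndexedFamily) : Prop :=
  ∃ (M : Machine) (T : Teacher) (p : Polynomial ℕ), ∀ A, 𝓕.Mem A → ∀ f, IsEnum f A →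
    ∃ h, 𝓕.F h = A ∧ M.PSDIdentifies (fun m => T.t (str f m)) h (p.eval (𝓕.mi A))

/-- `𝓕` is PSD[O]-learnable. -/
def PSDO (𝓕 : IndexedFamily) : Prop :=
  ∃ (M : OMachine) (p : Polynomial ℕ), ∀ A, 𝓕.Mem A → ∀ f, IsEnum f A →
    ∃ h, 𝓕.F h = A ∧ M.PSDIdentifies A (str f) h (p.eval (𝓕.mi A))

/-- `𝓕` is PSD[T,O]-learnable. -/
def PSDTO (𝓕 : IndexedFamily) : Prop :=
  ∃ (M : OMachine) (T : OTeacher) (p : Polynomial ℕ),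
    ∀ A, 𝓕.Mem A → ∀ f, IsEnum f A →
      ∃ h, 𝓕.F h = A ∧ ∃ hist : ℕ → List Bool, hist 0 = [] ∧
        ∃ n, M.TOSettles T A f hist h n ∧
          (T.t (str f n) (hist n)).toFinset.card < p.eval (𝓕.mi A) ∧
          (hist (n + 1)).length ≤ p.eval (𝓕.mi A)

/-! ### Polynomial mind-changes (PMC) -/

/-- The set of positions at which the hypothesis stream `g` changes its mind. -/
def MindChanges (g : ℕ → ℕ) : Set ℕ := {i | g i ≠ g (i + 1)}

/-- The hypothesis stream `g` changes its mind at most `B` times, and the only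
hypothesis appearing infinitely often in it is an index of `A` in `𝓕`. -/
def PMCCriterion (𝓕 : IndexedFamily) (A : Set ℕ) (g : ℕ → ℕ) (B : ℕ) : Prop :=
  (MindChanges g).Finite ∧ (MindChanges g).ncard ≤ B ∧
    ∀ h, {i | g i = h}.Infinite → 𝓕.F h = A

/-- `𝓕` is PMC-learnable. -/
def PMC (𝓕 : IndexedFamily) : Prop :=
  ∃ (M : Machine) (p : Polynomial ℕ), ∀ A, 𝓕.Mem A → ∀ f, IsEnum f A →
    ∃ g : ℕ → ℕ, (∀ m, M.eval (str f m) = Part.some (g m)) ∧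
      PMCCriterion 𝓕 A g (p.eval (𝓕.mi A))

/-- `𝓕` is PMC[T]-learnable. -/
def PMCT (𝓕 : IndexedFamily) : Prop :=
  ∃ (M : Machine) (T : Teacher) (p : Polynomial ℕ), ∀ A, 𝓕.Mem A → ∀ f, IsEnum f A →
    ∃ g : ℕ → ℕ, (∀ m, M.eval (T.t (str f m)) = Part.some (g m)) ∧
      PMCCriterion 𝓕 A g (p.eval (𝓕.mi A))

/-- `𝓕` is PMC[O]-learnable. -/
def PMCO (𝓕 : IndexedFamily) : Prop :=
  ∃ (M : OMachine) (p : Polynomial ℕ), ∀ A, 𝓕.Mem A → ∀ f, IsEnum f A →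
    ∃ g : ℕ → ℕ,
      (∀ m, ∃ ans, M.Out A (str f m) (g m) ans ∧ ans.length ≤ p.eval (𝓕.mi A)) ∧
      PMCCriterion 𝓕 A g (p.eval (𝓕.mi A))

/-- `𝓕` is PMC[T,O]-learnable. -/
def PMCTO (𝓕 : IndexedFamily) : Prop :=
  ∃ (M : OMachine) (T : OTeacher) (p : Polynomial ℕ),
    ∀ A, 𝓕.Mem A → ∀ f, IsEnum f A →
      ∃ hist : ℕ → List Bool, hist 0 = [] ∧
        ∃ g : ℕ → ℕ,
          (∀ m, M.Out A (T.t (str f m) (hist m)) (g m) (hist (m + 1)) ∧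
            (hist (m + 1)).length ≤ p.eval (𝓕.mi A)) ∧
          PMCCriterion 𝓕 A g (p.eval (𝓕.mi A))

/-! ### Polynomial size characteristic sample (PCS) -/

/-- `𝓕` is PCS-learnable: there are a machine, a polynomial bound and an
assignment of a characteristic sample to each member of `𝓕`. -/
def PCS (𝓕 : IndexedFamily) : Prop :=
  ∃ (M : Machine) (p : Polynomial ℕ) (S : Set ℕ → Finset ℕ),
    ∀ A, 𝓕.Mem A → ↑(S A) ⊆ A ∧ (S A).card < p.eval (𝓕.mi A) ∧
      ∃ e, 𝓕.F e = A ∧ ∀ f, IsEnum f A → ∀ n, (∀ x ∈ S A, x ∈ str f n) →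
        M.eval (str f n) = Part.some e

/-- `𝓕` is PCS[O]-learnable. -/
def PCSO (𝓕 : IndexedFamily) : Prop :=
  ∃ (M : OMachine) (p : Polynomial ℕ) (S : Set ℕ → Finset ℕ),
    ∀ A, 𝓕.Mem A → ↑(S A) ⊆ A ∧ (S A).card < p.eval (𝓕.mi A) ∧
      ∃ e, 𝓕.F e = A ∧ ∀ f, IsEnum f A → ∀ n, (∀ x ∈ S A, x ∈ str f n) →
        ∃ ans, M.Out A (str f n) e ans ∧ ans.length ≤ p.eval (𝓕.mi A)

/-- `𝓕` is PCS[T]-learnable: the characteristic sample must eventually appear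
in the teacher's output stream, after which the learner locks onto a correct
index. -/
def PCST (𝓕 : IndexedFamily) : Prop :=
  ∃ (M : Machine) (T : Teacher) (p : Polynomial ℕ) (S : Set ℕ → Finset ℕ),
    ∀ A, 𝓕.Mem A → ↑(S A) ⊆ A ∧ (S A).card < p.eval (𝓕.mi A) ∧
      ∃ e, 𝓕.F e = A ∧ ∀ f, IsEnum f A →
        (∃ n, ∀ x ∈ S A, x ∈ T.t (str f n)) ∧
        ∀ n, (∀ x ∈ S A, x ∈ T.t (str f n)) → M.eval (T.t (str f n)) = Part.some e

/-- `𝓕` is PCS[T,O]-learnable. -/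
def PCSTO (𝓕 : IndexedFamily) : Prop :=
  ∃ (M : OMachine) (T : OTeacher) (p : Polynomial ℕ) (S : Set ℕ → Finset ℕ),
    ∀ A, 𝓕.Mem A → ↑(S A) ⊆ A ∧ (S A).card < p.eval (𝓕.mi A) ∧
      ∃ e, 𝓕.F e = A ∧ ∀ f, IsEnum f A →
        ∃ hist : ℕ → List Bool, hist 0 = [] ∧
          (∃ n, ∀ x ∈ S A, x ∈ T.t (str f n) (hist n)) ∧
          ∀ n, (∀ x ∈ S A, x ∈ T.t (str f n) (hist n)) →
            M.Out A (T.t (str f n) (hist n)) e (hist (n + 1)) ∧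
            (hist (n + 1)).length ≤ p.eval (𝓕.mi A)

/-!
The oracle learner reads the largest element `m` seen so far and asks whether `m + 1` belongs to
the target: if so the target is `ℕ` (index `0`), otherwise it is `[0, m]` (index `m`) as soon as
the sample `{m}` has appeared. No teacher can help, because `ℕ` is a limit of the finite members
`[0, n]`: a teacher that has shown the learner the sample of `ℕ` on a prefix of an enumeration of
`ℕ` can be driven, by continuing that prefix as an enumeration of a large `[0, n]`, to show the
sample of `[0, n]` as well, and the same teacher output extends again to an enumeration of `ℕ`.
-/

lemma IndexedFamily.Mem.nonempty {𝓕 : IndexedFamily} {A : Set ℕ} (hA : 𝓕.Mem A) : A.Nonempty :=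
  let ⟨k, hk⟩ := hA
  hk ▸ 𝓕.nonempty k

lemma str_prefix_str (f : ℕ → ℕ) {a b : ℕ} (hab : a ≤ b) : str f a <+: str f b := by
  rw [show str f a = (str f b).take a by
    rw [str, str, ← List.map_take, List.take_range, Nat.min_eq_left hab]]
  exact List.take_prefix _ _

@[simp]
lemma length_str (f : ℕ → ℕ) (n : ℕ) : (str f n).length = n := by
  simp [str]

lemma exists_isEnum_str_eq {A : Set ℕ} (hA : A.Nonempty) {σ : List ℕ} (hσ : ∀ x ∈ σ, x ∈ A) :
    ∃ f, IsEnum f A ∧ str f σ.length = σ := by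
  obtain ⟨g, rfl⟩ := (Set.to_countable A).exists_eq_range hA
  refine ⟨fun k => if k < σ.length then σ.getD k 0 else g (k - σ.length), ?_, ?_⟩
  · refine Set.Subset.antisymm ?_ fun x ⟨k, hk⟩ => ⟨σ.length + k, by simpa using hk⟩
    rintro _ ⟨k, rfl⟩
    dsimp only
    split_ifs with hk
    · exact hσ _ (List.getD_eq_getElem σ 0 hk ▸ List.getElem_mem hk)
    · exact Set.mem_range_self _
  · refine List.ext_getElem (length_str _ _) fun k hk _ => ?_
    simp_all [str]

lemma mem_of_mem_str {f : ℕ → ℕ} {A : Set ℕ} (hf : IsEnum f A) {n x : ℕ} (hx : x ∈ str f n) :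
    x ∈ A := by
  obtain ⟨k, -, rfl⟩ := List.mem_map.1 hx
  exact hf ▸ Set.mem_range_self k

lemma Teacher.mem_of_le (T : Teacher) (f : ℕ → ℕ) {a b x : ℕ} (hab : a ≤ b)
    (hx : x ∈ T.t (str f a)) : x ∈ T.t (str f b) :=
  (T.mono (str_prefix_str f hab)).subset hx

theorem not_pcst_of_forall_exists_between (𝓕 : IndexedFamily) {U : Set ℕ} (hU : 𝓕.Mem U)
    (happrox : ∀ s : Finset ℕ, ↑s ⊆ U → ∃ B, 𝓕.Mem B ∧ ↑s ⊆ B ∧ B ⊆ U ∧ B ≠ U) :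
    ¬ PCST 𝓕 := by
  rintro ⟨M, T, p, S, hS⟩
  obtain ⟨-, -, e₀, he₀, hlearnU⟩ := hS U hU
  obtain ⟨f, hf, -⟩ := exists_isEnum_str_eq hU.nonempty (σ := []) (by simp)
  obtain ⟨n, hn⟩ := (hlearnU f hf).1
  obtain ⟨B, hB, hfB, hBU, hBne⟩ :=
    happrox (str f n).toFinset fun x hx => mem_of_mem_str hf (List.mem_toFinset.1 hx)
  obtain ⟨-, -, e₁, he₁, hlearnB⟩ := hS B hB
  obtain ⟨g, hg, hgn⟩ :=
    exists_isEnum_str_eq hB.nonempty fun x hx => hfB (List.mem_toFinset.2 hx)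
  rw [length_str] at hgn
  obtain ⟨n₁, hn₁⟩ := (hlearnB g hg).1
  set m := max n n₁
  obtain ⟨f', hf', hf'm⟩ :=
    exists_isEnum_str_eq hU.nonempty (σ := str g m) fun x hx => hBU (mem_of_mem_str hg hx)
  rw [length_str] at hf'm
  have hU_out : M.eval (T.t (str g m)) = Part.some e₀ :=
    hf'm ▸ (hlearnU f' hf').2 m fun x hx =>
      hf'm ▸ T.mem_of_le g (le_max_left n n₁) (hgn ▸ hn x hx)
  have hB_out : M.eval (T.t (str g m)) = Part.some e₁ :=
    (hlearnB g hg).2 m fun x hx => T.mem_of_le g (le_max_right n n₁) (hn₁ x hx)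
  have he : e₀ = e₁ := Part.some_inj.1 (hU_out.symm.trans hB_out)
  exact hBne (by rw [← he₁, ← he, he₀])

lemma IndexedFamily.mi_eq {𝓕 : IndexedFamily} {A : Set ℕ} {k : ℕ} (hk : 𝓕.F k = A)
    (hlt : ∀ j < k, 𝓕.F j ≠ A) : 𝓕.mi A = k :=
  le_antisymm (Nat.sInf_le hk) (le_csInf ⟨k, hk⟩ fun j hj => not_lt.1 fun h => hlt j h hj)

def listMax (σ : List ℕ) : ℕ := σ.foldr max 0

lemma le_listMax {σ : List ℕ} {x : ℕ} (hx : x ∈ σ) : x ≤ listMax σ :=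
  List.le_max_of_le hx le_rfl

lemma listMax_le {σ : List ℕ} {N : ℕ} (h : ∀ x ∈ σ, x ≤ N) : listMax σ ≤ N :=
  List.max_le_of_forall_le σ N h

lemma listMax_mono {σ τ : List ℕ} (h : σ ⊆ τ) : listMax σ ≤ listMax τ :=
  listMax_le fun _ hx => le_listMax (h hx)

lemma primrec_listMax : Primrec listMax :=
  (Primrec.list_foldr Primrec.id (Primrec.const 0)
    (Primrec.nat_max.comp (Primrec.fst.comp Primrec.snd) (Primrec.snd.comp Primrec.snd)).to₂).of_eq
    fun _ => rfl

/-- The step function of `intervalLearner`, in the encoding of `OMachine.step`: first query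
`listMax σ + 1`, then halt with `0` on a positive answer and with `listMax σ` on a negative one. -/
def intervalStep : List ℕ × List Bool → ℕ
  | (σ, []) => 2 * (listMax σ + 1)
  | (_, true :: _) => 2 * 0 + 1
  | (σ, false :: _) => 2 * listMax σ + 1

lemma primrec_intervalStep : Primrec intervalStep := by
  have hmax : Primrec fun x : List ℕ × List Bool => listMax x.1 := primrec_listMax.comp Primrec.fst
  have hanswer : Primrec₂ fun (x : List ℕ × List Bool) (p : Bool × List Bool) =>
      cond p.1 1 (2 * listMax x.1 + 1) :=
    (Primrec.cond (Primrec.fst.comp Primrec.snd) (Primrec.const 1)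
      (Primrec.succ.comp (Primrec.nat_mul.comp (Primrec.const 2) (hmax.comp Primrec.fst)))).to₂
  exact (Primrec.list_casesOn Primrec.snd
    (Primrec.nat_mul.comp (Primrec.const 2) (Primrec.succ.comp hmax)) hanswer).of_eq
    fun ⟨_, l⟩ => by rcases l with _ | ⟨_ | _, _⟩ <;> rfl

def intervalLearner : OMachine where
  step x := Part.some (intervalStep x)
  partrec := primrec_intervalStep.to_comp
  time x := Part.some (x.1.length + x.2.length + 2 * listMax x.1 + 2)
  time_dom _ := by simp
  length_le_time _ _ ht := by rw [Part.mem_some_iff.1 ht]; omega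
  queries_le_time _ _ ht := by rw [Part.mem_some_iff.1 ht]; omega
  size_le_time x _ _ ht hv := by
    rw [Part.mem_some_iff.1 ht, Part.mem_some_iff.1 hv]
    refine (Nat.size_le.2 Nat.lt_two_pow_self).trans ?_
    rcases x with ⟨_, _ | ⟨_ | _, _⟩⟩ <;> simp only [intervalStep] <;> omega
  time_mono σ τ a b s t hστ hab hs ht := by
    rw [Part.mem_some_iff.1 hs, Part.mem_some_iff.1 ht]
    dsimp only
    have := listMax_mono hστ.subset
    have := hστ.length_le
    have := hab.length_le
    omega

lemma intervalLearner_out (A : Set ℕ) (σ : List ℕ) :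
    intervalLearner.Out A σ (if listMax σ + 1 ∈ A then 0 else listMax σ)
      [decide (listMax σ + 1 ∈ A)] := by
  refine ⟨OMachine.Reach.query (ans := []) OMachine.Reach.nil (Part.mem_some_iff.2 rfl), ?_⟩
  by_cases h : listMax σ + 1 ∈ A <;> simp [h, intervalLearner, intervalStep]

lemma mem_eq_univ_or_Icc {𝓖 : IndexedFamily} (h0 : 𝓖.F 0 = Set.univ)
    (hn : ∀ n, 0 < n → 𝓖.F n = Set.Icc 0 n) {A : Set ℕ} (hA : 𝓖.Mem A) :
    A = Set.univ ∨ ∃ k, 0 < k ∧ A = Set.Icc 0 k := by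
  obtain ⟨k, rfl⟩ := hA
  rcases Nat.eq_zero_or_pos k with rfl | hk
  · exact .inl h0
  · exact .inr ⟨k, hk, hn k hk⟩

lemma mi_Icc {𝓖 : IndexedFamily} (h0 : 𝓖.F 0 = Set.univ)
    (hn : ∀ n, 0 < n → 𝓖.F n = Set.Icc 0 n) {k : ℕ} (hk : 0 < k) : 𝓖.mi (Set.Icc 0 k) = k := by
  refine IndexedFamily.mi_eq (hn k hk) fun j hjk h => ?_
  rcases Nat.eq_zero_or_pos j with rfl | hj
  · have : k + 1 ∈ Set.Icc 0 k := h ▸ h0 ▸ Set.mem_univ _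
    simp at this
  · have : k ∈ 𝓖.F j := h ▸ Set.right_mem_Icc.2 (Nat.zero_le k)
    rw [hn j hj, Set.mem_Icc] at this
    omega

theorem pcso_of_eq_univ_Icc {𝓖 : IndexedFamily} (h0 : 𝓖.F 0 = Set.univ)
    (hn : ∀ n, 0 < n → 𝓖.F n = Set.Icc 0 n) : PCSO 𝓖 := by
  refine ⟨intervalLearner, Polynomial.C 2, fun A => {𝓖.mi A}, fun A hA => ?_⟩
  simp only [Finset.coe_singleton, Set.singleton_subset_iff, Finset.card_singleton,
    Polynomial.eval_C, Finset.mem_singleton, forall_eq]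
  rcases mem_eq_univ_or_Icc h0 hn hA with rfl | ⟨k, hk, rfl⟩
  · refine ⟨Set.mem_univ _, one_lt_two, 0, h0, fun f _ n _ => ⟨[true], ?_, one_le_two⟩⟩
    simpa using intervalLearner_out Set.univ (str f n)
  · rw [mi_Icc h0 hn hk]
    refine ⟨Set.right_mem_Icc.2 (Nat.zero_le k), one_lt_two, k, hn k hk, fun f hf n hkn =>
      ⟨[false], ?_, one_le_two⟩⟩
    have hmax : listMax (str f n) = k :=
      le_antisymm (listMax_le fun x hx => (mem_of_mem_str hf hx).2) (le_listMax hkn)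
    simpa [hmax] using intervalLearner_out (Set.Icc 0 k) (str f n)

/-- The indexed family with `G_0 = ℕ` and `G_n = [0, n]` for
`n > 0` is PCS[O]-learnable but not PCS[T]-learnable. -/
theorem stmt15 (𝓖 : IndexedFamily) (h0 : 𝓖.F 0 = Set.univ)
    (hn : ∀ n, 0 < n → 𝓖.F n = Set.Icc 0 n) :
    PCSO 𝓖 ∧ ¬ PCST 𝓖 := by
  refine ⟨pcso_of_eq_univ_Icc h0 hn, not_pcst_of_forall_exists_between 𝓖 ⟨0, h0⟩ fun s _ => ?_⟩
  refine ⟨Set.Icc 0 (s.sup id + 1), ⟨_, hn _ (Nat.succ_pos _)⟩, fun x hx => ?_,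
    Set.subset_univ _, fun h => ?_⟩
  · exact ⟨Nat.zero_le x, (Finset.le_sup (f := id) hx).trans (Nat.le_succ _)⟩
  · have : s.sup id + 2 ∈ Set.Icc 0 (s.sup id + 1) := h ▸ Set.mem_univ _
    simp at this

end TeachLearn
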